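/- arXiv:1405.7671 — 2 statements merged into one kernel-verified Lean document; each statement's English description precedes it below -/
import Mathlib

section
/- Let y > 0 and let y_m (m ≥ 1) be a decreasing sequence of reals with y_m ≤ y. Define D⁺ as the set of squarefree integers d = p₁⋯p_r with p_r < ⋯ < p₁ and p_m ≤ y_m for all odd m, and ρ⁺(n) = ∑_{d | n, d ∈ D⁺} μ(d). Then for every positive integer n: if all prime factors of n exceed y then ρ⁺(n) = 1, and in general ρ⁺(n) ≥ 1_{P⁻(n) > y}, where P⁻(n) is the least prime factor of n (with P⁻(1) = ∞). -/
/-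
Write the prime factors of a squarefree divisor in decreasing order; then `ρ⁺(n)` is a signed
count of the sets of prime factors of `n` obeying the constraints at the odd positions. Removing
the largest prime `a`, the sets containing `a` contribute minus the analogous count for the
remaining primes with every position shifted by one, which swaps constrained and unconstrained
positions. So the upper weight (odd positions constrained) is expressed through a lower weight
(even positions constrained) and vice versa, and induction on the set of primes proves
`upper ≥ 1_{all primes > y} ≥ lower` simultaneously: if `a ≤ y₁ ≤ y` the indicator vanishes and
the upper weight becomes the difference of an upper and a lower weight for the smaller set.
-/

open scoped Classical

/-- `d ∈ D⁺`: `d` is squarefree and, writing `d = p₁ ⋯ p_r` with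
`p_r < ⋯ < p₁`, we have `p_m ≤ ys m` for all odd `m`. -/
def DPlus (ys : ℕ → ℝ) (d : ℕ) : Prop :=
  Squarefree d ∧ ∀ m : ℕ, Odd m →
    ∀ hm : m - 1 < d.primeFactorsList.reverse.length,
      ((d.primeFactorsList.reverse.get ⟨m - 1, hm⟩ : ℕ) : ℝ) ≤ ys m

/-- Brun's sieve weight `ρ⁺(n) = ∑_{d ∣ n, d ∈ D⁺} μ(d)`. -/
noncomputable def rhoPlus (ys : ℕ → ℝ) (n : ℕ) : ℤ :=
  ∑ d ∈ n.divisors, if DPlus ys d then ArithmeticFunction.moebius d else 0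

open Finset

theorem Nat.sum_divisors_filter_squarefree_comp_primeFactors {M : Type*} [AddCommMonoid M]
    {n : ℕ} (hn : n ≠ 0) (F : Finset ℕ → M) :
    ∑ d ∈ n.divisors with Squarefree d, F d.primeFactors = ∑ T ∈ n.primeFactors.powerset, F T := by
  rw [Nat.sum_divisors_filter_squarefree hn, Nat.factors_eq, List.toFinset_coe,
    Nat.toFinset_factors]
  refine sum_congr rfl fun T hT => ?_
  rw [prod_val]
  exact congrArg F <| Nat.primeFactors_prod fun p hp =>
    Nat.prime_of_mem_primeFactors (mem_powerset.1 hT hp)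

theorem Nat.sort_primeFactors_ge_of_squarefree {d : ℕ} (hd : Squarefree d) :
    d.primeFactors.sort (· ≥ ·) = d.primeFactorsList.reverse := by
  rw [← Nat.toFinset_factors, ← List.toFinset_reverse, List.toFinset_sort _
    (List.nodup_reverse.2 hd.nodup_primeFactorsList), List.pairwise_reverse]
  exact (Nat.primeFactorsList_sorted d).pairwise

theorem ArithmeticFunction.moebius_eq_neg_one_pow_card_primeFactors {d : ℕ}
    (hd : Squarefree d) : moebius d = (-1) ^ #d.primeFactors := by
  rw [moebius_apply_of_squarefree hd, cardFactors_apply,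
    ← Nat.toFinset_factors, List.toFinset_card_of_nodup hd.nodup_primeFactorsList]

namespace Brun

/-- `L` is admissible if it satisfies the constraints of `D⁺` when it sits at the (1-based)
positions `k + 1, k + 2, …` of a longer list. -/
def Admissible (ys : ℕ → ℝ) (k : ℕ) (L : List ℕ) : Prop :=
  ∀ i (hi : i < L.length), Even (k + i) → (L[i] : ℝ) ≤ ys (k + i + 1)

theorem admissible_nil (ys : ℕ → ℝ) (k : ℕ) : Admissible ys k [] :=
  fun _ hi => absurd hi (Nat.not_lt_zero _)

theorem admissible_cons {ys : ℕ → ℝ} {k a : ℕ} {L : List ℕ} :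
    Admissible ys k (a :: L) ↔ (Even k → (a : ℝ) ≤ ys (k + 1)) ∧ Admissible ys (k + 1) L := by
  have shift (i : ℕ) : k + 1 + i = k + (i + 1) := by omega
  refine ⟨fun h => ⟨h 0 (by simp), fun i hi hki => ?_⟩, ?_⟩
  · rw [shift] at hki ⊢
    exact h (i + 1) (by simpa using hi) hki
  · rintro ⟨h0, h1⟩ (_ | i) hi hki
    · exact h0 hki
    · rw [← shift] at hki ⊢
      exact h1 i (by simpa using hi) hki

theorem dPlus_iff {ys : ℕ → ℝ} {d : ℕ} :
    DPlus ys d ↔ Squarefree d ∧ Admissible ys 0 d.primeFactorsList.reverse := by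
  refine and_congr_right fun _ => ⟨fun h i hi hi' => ?_, fun h m hm hm' => ?_⟩
  · rw [zero_add] at hi' ⊢
    exact h (i + 1) hi'.add_one hi
  · obtain ⟨j, rfl⟩ := hm
    simpa using h (2 * j) hm' (by simp)

noncomputable def weight (ys : ℕ → ℝ) (k : ℕ) (P : Finset ℕ) : ℤ :=
  ∑ T ∈ P.powerset, if Admissible ys k (T.sort (· ≥ ·)) then (-1) ^ #T else 0

theorem weight_empty (ys : ℕ → ℝ) (k : ℕ) : weight ys k ∅ = 1 := by
  simp [weight, admissible_nil]

theorem weight_insert_of_forall_lt {ys : ℕ → ℝ} {k a : ℕ} {S : Finset ℕ}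
    (hS : ∀ b ∈ S, b < a) :
    weight ys k (insert a S) =
      weight ys k S - if Even k → (a : ℝ) ≤ ys (k + 1) then weight ys (k + 1) S else 0 := by
  have ha : a ∉ S := fun h => lt_irrefl a (hS a h)
  rw [weight, sum_powerset_insert ha, sub_eq_add_neg, weight]
  congr 1
  have hsummand : ∀ T ∈ S.powerset,
      (if Admissible ys k ((insert a T).sort (· ≥ ·)) then (-1) ^ #(insert a T) else 0) =
        if Even k → (a : ℝ) ≤ ys (k + 1) then
          -(if Admissible ys (k + 1) (T.sort (· ≥ ·)) then (-1) ^ #T else 0) else (0 : ℤ) := by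
    intro T hT
    have hTS := mem_powerset.1 hT
    have haT : a ∉ T := fun h => ha (hTS h)
    rw [sort_insert _ (fun b hb => (hS b (hTS hb)).le) haT, admissible_cons,
      card_insert_of_notMem haT, pow_succ]
    by_cases hc : Even k → (a : ℝ) ≤ ys (k + 1)
    · rw [if_pos hc, and_iff_right hc, apply_ite Neg.neg, neg_zero, mul_neg_one]
    · rw [if_neg hc, if_neg fun h => hc h.1]
  rw [sum_congr rfl hsummand]
  split_ifs <;> simp [weight]

theorem weight_eq_one {ys : ℕ → ℝ} {k : ℕ} (hk : Even k) {P : Finset ℕ}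
    (hP : ∀ q ∈ P, ys (k + 1) < q) : weight ys k P = 1 := by
  induction P using induction_on_max with
  | empty => exact weight_empty ys k
  | insert a S hS ih =>
    rw [weight_insert_of_forall_lt hS, ih fun q hq => hP q (mem_insert_of_mem hq),
      if_neg fun h => (h hk).not_gt (hP a (mem_insert_self a S)), sub_zero]

theorem weight_bounds {y : ℝ} {ys : ℕ → ℝ} (hys : ∀ m : ℕ, 1 ≤ m → ys m ≤ y) (P : Finset ℕ)
    (k : ℕ) :
    (Even k → (if ∀ q ∈ P, y < (q : ℝ) then (1 : ℤ) else 0) ≤ weight ys k P) ∧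
      (Odd k → weight ys k P ≤ if ∀ q ∈ P, y < (q : ℝ) then (1 : ℤ) else 0) := by
  induction P using induction_on_max generalizing k with
  | empty => simp [weight_empty]
  | insert a S hS ih =>
    have hsift : (if ∀ q ∈ insert a S, y < (q : ℝ) then (1 : ℤ) else 0) =
        if y < a then (if ∀ q ∈ S, y < (q : ℝ) then 1 else 0) else 0 := by
      by_cases ha : y < a <;> simp [ha]
    rw [weight_insert_of_forall_lt hS, hsift]
    set I : ℤ := if ∀ q ∈ S, y < (q : ℝ) then 1 else 0 with hI
    have hI₀ : 0 ≤ I := by rw [hI]; split_ifs <;> norm_num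
    refine ⟨fun hk => ?_, fun hk => ?_⟩
    · by_cases ha : (a : ℝ) ≤ ys (k + 1)
      · have hay : ¬ y < a := (ha.trans (hys (k + 1) k.succ_pos)).not_gt
        rw [if_pos fun _ => ha, if_neg hay]
        linarith [(ih k).1 hk, (ih (k + 1)).2 hk.add_one]
      · have hc : ¬(Even k → (a : ℝ) ≤ ys (k + 1)) := fun h => ha (h hk)
        rw [if_neg hc, sub_zero]
        split_ifs <;> linarith [(ih k).1 hk]
    · rw [if_pos fun h => absurd h (Nat.not_even_iff_odd.2 hk)]
      have := (ih k).2 hk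
      have := (ih (k + 1)).1 hk.add_one
      split_ifs <;> linarith

theorem rhoPlus_eq_weight (ys : ℕ → ℝ) {n : ℕ} (hn : n ≠ 0) :
    rhoPlus ys n = weight ys 0 n.primeFactors := by
  have hsupport : ∀ d ∈ n.divisors,
      (if DPlus ys d then ArithmeticFunction.moebius d else 0) ≠ 0 → Squarefree d := by
    intro d _ h
    split_ifs at h with hd
    exacts [hd.1, absurd rfl h]
  rw [rhoPlus, ← sum_filter_of_ne hsupport, weight,
    ← Nat.sum_divisors_filter_squarefree_comp_primeFactors hn]
  refine sum_congr rfl fun d hd => ?_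
  have hd := (mem_filter.1 hd).2
  rw [dPlus_iff, and_iff_right hd, ← Nat.sort_primeFactors_ge_of_squarefree hd,
    ArithmeticFunction.moebius_eq_neg_one_pow_card_primeFactors hd]

end Brun

theorem brun_sieve_upper_bound_property_general (y : ℝ)
    (ys : ℕ → ℝ) (hbd : ∀ m : ℕ, 1 ≤ m → ys m ≤ y) :
    ∀ n : ℕ, 1 ≤ n →
      ((∀ p : ℕ, p.Prime → p ∣ n → y < (p : ℝ)) → rhoPlus ys n = 1) ∧
      ((if ∀ p : ℕ, p.Prime → p ∣ n → y < (p : ℝ) then (1:ℤ) else 0) ≤ rhoPlus ys n) := by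
  intro n hn
  have hn0 : n ≠ 0 := Nat.one_le_iff_ne_zero.1 hn
  have hsifted :
      (∀ p : ℕ, p.Prime → p ∣ n → y < (p : ℝ)) ↔ ∀ q ∈ n.primeFactors, y < (q : ℝ) := by
    simp [Nat.mem_primeFactors, hn0]
  simp only [hsifted, Brun.rhoPlus_eq_weight ys hn0]
  exact ⟨fun h => Brun.weight_eq_one Even.zero fun q hq => (hbd 1 le_rfl).trans_lt (h q hq),
    (Brun.weight_bounds hbd _ 0).1 Even.zero⟩

theorem brun_sieve_upper_bound_property (y : ℝ) (hy : 0 < y)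
    (ys : ℕ → ℝ) (hdec : ∀ m, ys (m+1) ≤ ys m) (hbd : ∀ m : ℕ, 1 ≤ m → ys m ≤ y) :
    ∀ n : ℕ, 1 ≤ n →
      ((∀ p : ℕ, p.Prime → p ∣ n → y < (p : ℝ)) → rhoPlus ys n = 1) ∧
      ((if ∀ p : ℕ, p.Prime → p ∣ n → y < (p : ℝ) then (1:ℤ) else 0) ≤ rhoPlus ys n) :=
  brun_sieve_upper_bound_property_general y ys hbd
end

section
/- Let g : ℕ → ℝ≥0 be a multiplicative function supported on squarefree numbers (g(p^ν) = 0 for ν ≥ 2) with g(p) ≤ 1 for all p. Then for all x ≥ 1, ∑_{n ≤ x} g(n) ≤ x·∏_{p ≤ x} (1 − 1/p)(1 + g(p)/p) · C for some absolute constant C. In particular, for the indicator g(n) = μ(n)²·1_{λ(p)≠0 ∀ p|n} one gets #{n ≤ x : n squarefree, λ(p) ≠ 0 for all p | n} ≪ x·∏_{p ≤ x, λ(p)=0}(1 − 1/p). -/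
/-!
Write `S = ∑_{n ≤ x} g n`. Splitting `log x = log n + log (x / n)` and using
`1 + log (x / n) ≤ x / n` gives `S (1 + log x) ≤ ∑_{n ≤ x} g n log n + x ∑_{n ≤ x} g n / n`.
Since `g` is supported on squarefree numbers, `g n log n = ∑_{d ∣ n} g d Λ d g (n / d)`, so the
first sum is at most `∑_{m ≤ x} g m ψ(x / m) ≪ x ∑_{m ≤ x} g m / m` by Chebyshev's bound, and
`∑_{m ≤ x} g m / m ≤ ∏_{p ≤ x} (1 + g p / p)`. Finally Mertens' estimate
`∏_{p ≤ x} (1 - 1 / p) ≫ 1 / log x`, which follows from `∑_{n ≤ x} Λ n / n ≤ log x + O(1)` by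
partial summation, trades `1 / (1 + log x)` for `∏_{p ≤ x} (1 - 1 / p)`. The counting statement
is the case of an indicator function `g`, for which `(1 - 1 / p) (1 + g p / p)` equals `1 - 1 / p`
when `λ p = 0` and is at most `1` otherwise.
-/

open scoped Classical

open Finset Real
open ArithmeticFunction hiding log

theorem sum_vonMangoldt_div_le (N : ℕ) :
    ∑ n ∈ Ioc 0 N, Λ n / n ≤ log N + (log 4 + 4) := by
  rcases N.eq_zero_or_pos with rfl | hN
  · simp only [Ioc_self, sum_empty, CharP.cast_eq_zero, log_zero, zero_add]
    positivity
  have hNR : (0 : ℝ) < N := by exact_mod_cast hN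
  have hfloor : ∀ n ∈ Ioc 0 N, N * (Λ n / n) - Λ n ≤ Λ n * (N / n : ℕ) := by
    intro n hn
    have hn0 : (0 : ℝ) < n := by exact_mod_cast (mem_Ioc.1 hn).1
    have hlt : (N : ℝ) < ((N / n : ℕ) + 1) * n := by
      exact_mod_cast (by simpa [add_mul] using Nat.lt_div_mul_add (a := N) (mem_Ioc.1 hn).1)
    have : N * (Λ n / n) - Λ n = Λ n * (N / n - 1) := by field_simp
    rw [this]
    gcongr
    rw [sub_le_iff_le_add, div_le_iff₀ hn0]
    exact hlt.le
  have hlogsum : ∑ n ∈ Ioc 0 N, Λ n * (N / n : ℕ) = ∑ n ∈ Ioc 0 N, log n := by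
    rw [← sum_Ioc_mul_zeta_eq_sum, vonMangoldt_mul_zeta]
    simp only [ArithmeticFunction.log_apply]
  have hlog_le : ∑ n ∈ Ioc 0 N, log n ≤ N * log N := by
    calc ∑ n ∈ Ioc 0 N, log n ≤ ∑ _n ∈ Ioc 0 N, log N :=
          sum_le_sum fun n hn ↦ log_le_log (by exact_mod_cast (mem_Ioc.1 hn).1)
            (by exact_mod_cast (mem_Ioc.1 hn).2)
      _ = N * log N := by simp
  have hpsi : ∑ n ∈ Ioc 0 N, Λ n ≤ (log 4 + 4) * N := by
    simpa [Chebyshev.psi] using Chebyshev.psi_le_const_mul_self (Nat.cast_nonneg (α := ℝ) N)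
  have := sum_le_sum hfloor
  rw [sum_sub_distrib, ← mul_sum, hlogsum] at this
  rw [← mul_le_mul_iff_of_pos_left hNR]
  linarith

/-- Discrete partial summation against `1 / log n`. -/
theorem sum_div_log_le_sum_sub_div_log_add {a : ℕ → ℝ} {c : ℝ}
    (ha : ∀ N, 2 ≤ N → ∑ n ∈ Ioc 1 N, a n ≤ log N + c) {N : ℕ} (hN : 2 ≤ N) :
    ∑ n ∈ Ioc 1 N, a n / log n
      ≤ (∑ n ∈ Ioc 1 N, a n - c) / log N + log (log N) + (c / log 2 - log (log 2)) := by
  induction N, hN using Nat.le_induction with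
  | base =>
    simp only [show Ioc 1 2 = {2} from rfl, sum_singleton, Nat.cast_ofNat]
    exact le_of_eq (by ring)
  | succ N hN ih =>
    have hu : 0 < log N := log_pos (by exact_mod_cast hN)
    have huv : log N < log (N + 1 : ℕ) := log_lt_log (by positivity) (by push_cast; linarith)
    have hv : 0 < log (N + 1 : ℕ) := hu.trans huv
    have hstep : (∑ n ∈ Ioc 1 N, a n - c) * ((log N)⁻¹ - (log (N + 1 : ℕ))⁻¹)
        ≤ log (log (N + 1 : ℕ)) - log (log N) := by
      calc (∑ n ∈ Ioc 1 N, a n - c) * ((log N)⁻¹ - (log (N + 1 : ℕ))⁻¹)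
          ≤ log N * ((log N)⁻¹ - (log (N + 1 : ℕ))⁻¹) := by
            gcongr
            · rw [sub_nonneg]; exact inv_anti₀ hu huv.le
            · linarith [ha N hN]
        _ = 1 - (log (N + 1 : ℕ) / log N)⁻¹ := by field_simp
        _ ≤ log (log (N + 1 : ℕ) / log N) := one_sub_inv_le_log_of_pos (by positivity)
        _ = log (log (N + 1 : ℕ)) - log (log N) := log_div hv.ne' hu.ne'
    rw [sum_Ioc_succ_top (by omega), sum_Ioc_succ_top (by omega)]
    have : (∑ n ∈ Ioc 1 N, a n + a (N + 1) - c) / log (N + 1 : ℕ)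
        = (∑ n ∈ Ioc 1 N, a n - c) / log (N + 1 : ℕ) + a (N + 1) / log (N + 1 : ℕ) := by ring
    rw [this]
    simp only [div_eq_mul_inv] at ih hstep ⊢
    push_cast at *
    linarith

theorem sum_div_log_le_log_log_add {a : ℕ → ℝ} {c : ℝ}
    (ha : ∀ N, 2 ≤ N → ∑ n ∈ Ioc 1 N, a n ≤ log N + c) {N : ℕ} (hN : 2 ≤ N) :
    ∑ n ∈ Ioc 1 N, a n / log n ≤ log (log N) + (1 + c / log 2 - log (log 2)) := by
  have hlog : 0 < log N := log_pos (by exact_mod_cast hN)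
  have : (∑ n ∈ Ioc 1 N, a n - c) / log N ≤ 1 := by
    rw [div_le_one hlog]; linarith [ha N hN]
  linarith [sum_div_log_le_sum_sub_div_log_add ha hN]

theorem exists_sum_inv_prime_le_log_log_add :
    ∃ K, ∀ N : ℕ, 2 ≤ N → ∑ p ∈ Nat.primesLE N, (p : ℝ)⁻¹ ≤ log (log N) + K := by
  refine ⟨_, fun N hN ↦ le_trans ?_ (sum_div_log_le_log_log_add (a := fun n ↦ Λ n / n)
    (fun M _ ↦ le_trans ?_ (sum_vonMangoldt_div_le M)) hN)⟩
  · have hsub : Nat.primesLE N ⊆ Ioc 1 N := fun p hp ↦ by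
      rw [Nat.mem_primesLE] at hp
      exact mem_Ioc.2 ⟨hp.2.one_lt, hp.1⟩
    calc ∑ p ∈ Nat.primesLE N, (p : ℝ)⁻¹ = ∑ p ∈ Nat.primesLE N, Λ p / p / log p := by
          refine sum_congr rfl fun p hp ↦ ?_
          have hp := (Nat.mem_primesLE.1 hp).2
          have : 0 < log p := log_pos (by exact_mod_cast hp.one_lt)
          rw [vonMangoldt_apply_prime hp]
          field_simp
      _ ≤ _ := sum_le_sum_of_subset_of_nonneg hsub fun n hn _ ↦ by
          have : 0 ≤ log n := log_nonneg (by exact_mod_cast (mem_Ioc.1 hn).1.le)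
          positivity
  · exact sum_le_sum_of_subset_of_nonneg (Ioc_subset_Ioc_left zero_le_one) fun n _ _ ↦ by
      positivity

theorem neg_inv_add_two_mul_inv_sq_le_log_one_sub_inv {x : ℝ} (hx : 2 ≤ x) :
    -(x⁻¹ + 2 * (x ^ 2)⁻¹) ≤ log (1 - x⁻¹) := by
  have hx0 : 0 < x := by linarith
  have hpos : 0 < 1 - x⁻¹ := by rw [sub_pos]; exact inv_lt_one_of_one_lt₀ (by linarith)
  refine le_trans ?_ (one_sub_inv_le_log_of_pos hpos)
  have : 1 - (1 - x⁻¹)⁻¹ = -(x - 1)⁻¹ := by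
    have hx1 : x - 1 ≠ 0 := by linarith
    rw [show 1 - x⁻¹ = (x - 1) / x by field_simp, inv_div]
    field_simp
    ring
  rw [this, neg_le_neg_iff, inv_le_iff_one_le_mul₀ (by linarith)]
  field_simp
  nlinarith

theorem exists_pos_le_log_mul_prod_one_sub_inv_prime :
    ∃ c > 0, ∀ N : ℕ, 2 ≤ N → c ≤ log N * ∏ p ∈ Nat.primesLE N, (1 - (p : ℝ)⁻¹) := by
  obtain ⟨K, hK⟩ := exists_sum_inv_prime_le_log_log_add
  refine ⟨exp (-(K + 2)), exp_pos _, fun N hN ↦ ?_⟩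
  have hlog : 0 < log N := log_pos (by exact_mod_cast hN)
  have htwo : ∀ p ∈ Nat.primesLE N, (2 : ℝ) ≤ p := fun p hp ↦ by
    exact_mod_cast (Nat.mem_primesLE.1 hp).2.two_le
  have hsq : ∑ p ∈ Nat.primesLE N, ((p : ℝ) ^ 2)⁻¹ ≤ 1 := by
    have hsub : Nat.primesLE N ⊆ Ioo 1 (N + 1) := fun p hp ↦ by
      rw [Nat.mem_primesLE] at hp
      exact mem_Ioo.2 ⟨hp.2.one_lt, Nat.lt_succ_of_le hp.1⟩
    calc _ ≤ ∑ n ∈ Ioo 1 (N + 1), ((n : ℝ) ^ 2)⁻¹ :=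
          sum_le_sum_of_subset_of_nonneg hsub fun _ _ _ ↦ by positivity
      _ ≤ 2 / ((1 : ℕ) + 1) := sum_Ioo_inv_sq_le 1 (N + 1)
      _ = 1 := by norm_num
  have hsum : -(log (log N) + K + 2) ≤ ∑ p ∈ Nat.primesLE N, log (1 - (p : ℝ)⁻¹) := by
    calc -(log (log N) + K + 2)
        ≤ -∑ p ∈ Nat.primesLE N, ((p : ℝ)⁻¹ + 2 * ((p : ℝ) ^ 2)⁻¹) := by
          rw [sum_add_distrib, ← mul_sum]; linarith [hK N hN]
      _ ≤ _ := by
          rw [← sum_neg_distrib]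
          exact sum_le_sum fun p hp ↦ neg_inv_add_two_mul_inv_sq_le_log_one_sub_inv (htwo p hp)
  have hprod : ∏ p ∈ Nat.primesLE N, (1 - (p : ℝ)⁻¹)
      = exp (∑ p ∈ Nat.primesLE N, log (1 - (p : ℝ)⁻¹)) := by
    rw [exp_sum]
    refine prod_congr rfl fun p hp ↦ (exp_log ?_).symm
    rw [sub_pos]
    exact inv_lt_one_of_one_lt₀ (by linarith [htwo p hp])
  calc exp (-(K + 2)) = log N * exp (-(log (log N) + K + 2)) := by
        rw [show -(log (log N) + K + 2) = -log (log N) + -(K + 2) by ring, exp_add,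
          exp_neg (log (log N)), exp_log hlog]
        field_simp
    _ ≤ _ := by rw [hprod]; gcongr

theorem exists_pos_le_one_add_log_mul_prod_one_sub_inv_prime :
    ∃ c > 0, ∀ N : ℕ, c ≤ (1 + log N) * ∏ p ∈ Nat.primesLE N, (1 - (p : ℝ)⁻¹) := by
  obtain ⟨c, hc, hmertens⟩ := exists_pos_le_log_mul_prod_one_sub_inv_prime
  refine ⟨min c 1, by positivity, fun N ↦ ?_⟩
  rcases Nat.lt_or_ge N 2 with hN | hN
  · interval_cases N <;> simp [Nat.primesLE_zero, Nat.primesLE_one]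
  have hD : 0 ≤ ∏ p ∈ Nat.primesLE N, (1 - (p : ℝ)⁻¹) :=
    prod_nonneg fun p _ ↦ sub_nonneg.2 (Nat.cast_inv_le_one p)
  calc min c 1 ≤ log N * ∏ p ∈ Nat.primesLE N, (1 - (p : ℝ)⁻¹) :=
        (min_le_left c 1).trans (hmertens N hN)
    _ ≤ (1 + log N) * ∏ p ∈ Nat.primesLE N, (1 - (p : ℝ)⁻¹) := by gcongr; linarith

namespace ArithmeticFunction

def ofFun {R : Type*} [Zero R] (g : ℕ → R) : ArithmeticFunction R :=
  ⟨fun n ↦ if n = 0 then 0 else g n, if_pos rfl⟩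

theorem ofFun_apply {R : Type*} [Zero R] {g : ℕ → R} {n : ℕ} (hn : n ≠ 0) : ofFun g n = g n :=
  if_neg hn

theorem isMultiplicative_ofFun {R : Type*} [MonoidWithZero R] {g : ℕ → R} (h1 : g 1 = 1)
    (hmul : ∀ m n, m.Coprime n → g (m * n) = g m * g n) : (ofFun g).IsMultiplicative := by
  refine IsMultiplicative.iff_ne_zero.2 ⟨by rw [ofFun_apply one_ne_zero, h1], ?_⟩
  intro m n hm hn hmn
  rw [ofFun_apply (mul_ne_zero hm hn), ofFun_apply hm, ofFun_apply hn, hmul m n hmn]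

variable {f : ArithmeticFunction ℝ}

theorem sum_mul_vonMangoldt_le (hf_sq : ∀ p k, p.Prime → 2 ≤ k → f (p ^ k) = 0)
    (hf_le : ∀ p, p.Prime → f p ≤ 1) (N : ℕ) :
    ∑ n ∈ Ioc 0 N, f n * Λ n ≤ (Real.log 4 + 4) * N := by
  calc ∑ n ∈ Ioc 0 N, f n * Λ n ≤ ∑ n ∈ Ioc 0 N, Λ n := sum_le_sum fun n _ ↦ by
        by_cases hΛ : Λ n = 0
        · simp [hΛ]
        obtain ⟨p, k, hp, hk, rfl⟩ := (isPrimePow_nat_iff n).1 (vonMangoldt_ne_zero_iff.1 hΛ)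
        rcases Nat.lt_or_ge k 2 with hk2 | hk2
        · obtain rfl : k = 1 := by omega
          rw [pow_one]
          exact mul_le_of_le_one_left vonMangoldt_nonneg (hf_le p hp)
        · rw [hf_sq p k hp hk2, zero_mul]
          exact vonMangoldt_nonneg
    _ ≤ (Real.log 4 + 4) * N := by
        simpa [Chebyshev.psi] using Chebyshev.psi_le_const_mul_self (Nat.cast_nonneg (α := ℝ) N)

namespace IsMultiplicative

theorem eq_zero_of_not_squarefree (hf : f.IsMultiplicative)
    (hf_sq : ∀ p k, p.Prime → 2 ≤ k → f (p ^ k) = 0) {n : ℕ} (hn : ¬Squarefree n) : f n = 0 := by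
  rcases eq_or_ne n 0 with rfl | hn0
  · simp
  obtain ⟨p, hp, hpp⟩ : ∃ p, p.Prime ∧ p * p ∣ n := by
    simpa [Nat.squarefree_iff_prime_squarefree] using hn
  have hk : 2 ≤ n.factorization p :=
    (hp.pow_dvd_iff_le_factorization hn0).1 (by rwa [sq])
  rw [← Nat.ordProj_mul_ordCompl_eq_self n p, hf.map_mul_of_coprime
    (Nat.Coprime.pow_left _ (Nat.coprime_ordCompl hp hn0)), hf_sq p _ hp hk, zero_mul]

theorem map_mul_div_of_squarefree (hf : f.IsMultiplicative) {n d : ℕ} (hn : Squarefree n)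
    (hd : d ∣ n) : f n = f d * f (n / d) := by
  have hdn : d * (n / d) = n := Nat.mul_div_cancel' hd
  rw [← hf.map_mul_of_coprime (Nat.coprime_of_squarefree_mul (by rwa [hdn])), hdn]

theorem mul_log_le_pmul_vonMangoldt_mul (hf : f.IsMultiplicative)
    (hf_sq : ∀ p k, p.Prime → 2 ≤ k → f (p ^ k) = 0) (hf_nonneg : ∀ n, 0 ≤ f n) (n : ℕ) :
    f n * Real.log n ≤ (f.pmul Λ * f) n := by
  rw [mul_apply, Nat.sum_divisorsAntidiagonal (fun d m ↦ f.pmul Λ d * f m)]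
  by_cases hn : Squarefree n
  · rw [← vonMangoldt_sum, mul_sum]
    refine le_of_eq (sum_congr rfl fun d hd ↦ ?_)
    rw [pmul_apply, hf.map_mul_div_of_squarefree hn (Nat.dvd_of_mem_divisors hd)]
    ring
  · rw [hf.eq_zero_of_not_squarefree hf_sq hn, zero_mul]
    exact sum_nonneg fun d _ ↦ mul_nonneg (mul_nonneg (hf_nonneg d) vonMangoldt_nonneg)
      (hf_nonneg _)

theorem sum_mul_log_le (hf : f.IsMultiplicative)
    (hf_sq : ∀ p k, p.Prime → 2 ≤ k → f (p ^ k) = 0) (hf_nonneg : ∀ n, 0 ≤ f n)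
    (hf_le : ∀ p, p.Prime → f p ≤ 1) (N : ℕ) :
    ∑ n ∈ Ioc 0 N, f n * Real.log n ≤ (Real.log 4 + 4) * N * ∑ n ∈ Ioc 0 N, f n / n := by
  calc ∑ n ∈ Ioc 0 N, f n * Real.log n ≤ ∑ n ∈ Ioc 0 N, (f * f.pmul Λ) n := by
        rw [mul_comm f]
        exact sum_le_sum fun n _ ↦ hf.mul_log_le_pmul_vonMangoldt_mul hf_sq hf_nonneg n
    _ = ∑ n ∈ Ioc 0 N, f n * ∑ m ∈ Ioc 0 (N / n), f m * Λ m := by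
        rw [sum_Ioc_mul_eq_sum_sum]
        simp only [pmul_apply]
    _ ≤ ∑ n ∈ Ioc 0 N, f n * ((Real.log 4 + 4) * N / n) := by
        gcongr with n
        · exact hf_nonneg n
        · refine (sum_mul_vonMangoldt_le hf_sq hf_le _).trans ?_
          rw [mul_div_assoc]
          gcongr
          exact Nat.cast_div_le
    _ = (Real.log 4 + 4) * N * ∑ n ∈ Ioc 0 N, f n / n := by
        rw [mul_sum]
        exact sum_congr rfl fun n _ ↦ by ring

theorem sum_mul_one_add_log_le (hf : f.IsMultiplicative)
    (hf_sq : ∀ p k, p.Prime → 2 ≤ k → f (p ^ k) = 0) (hf_nonneg : ∀ n, 0 ≤ f n)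
    (hf_le : ∀ p, p.Prime → f p ≤ 1) (N : ℕ) :
    (∑ n ∈ Ioc 0 N, f n) * (1 + Real.log N)
      ≤ (Real.log 4 + 5) * N * ∑ n ∈ Ioc 0 N, f n / n := by
  have hsplit : ∀ n ∈ Ioc 0 N, f n * (1 + Real.log N)
      ≤ f n * Real.log n + N * (f n / n) := fun n hnN ↦ by
    have hn : (0 : ℝ) < n := by exact_mod_cast (mem_Ioc.1 hnN).1
    have hN : (0 : ℝ) < N := hn.trans_le (by exact_mod_cast (mem_Ioc.1 hnN).2)
    have : 1 + Real.log N ≤ Real.log n + N / n := by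
      have := Real.log_le_sub_one_of_pos (div_pos hN hn)
      rw [Real.log_div hN.ne' hn.ne'] at this
      linarith
    calc f n * (1 + Real.log N) ≤ f n * (Real.log n + N / n) :=
          mul_le_mul_of_nonneg_left this (hf_nonneg n)
      _ = f n * Real.log n + N * (f n / n) := by ring
  calc (∑ n ∈ Ioc 0 N, f n) * (1 + Real.log N)
      ≤ ∑ n ∈ Ioc 0 N, f n * Real.log n + N * ∑ n ∈ Ioc 0 N, f n / n := by
        rw [sum_mul, mul_sum, ← sum_add_distrib]
        exact sum_le_sum hsplit
    _ ≤ (Real.log 4 + 5) * N * ∑ n ∈ Ioc 0 N, f n / n := by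
        have := hf.sum_mul_log_le hf_sq hf_nonneg hf_le N
        linarith

theorem sum_div_le_prod_one_add (hf : f.IsMultiplicative)
    (hf_sq : ∀ p k, p.Prime → 2 ≤ k → f (p ^ k) = 0) (hf_nonneg : ∀ n, 0 ≤ f n) (N : ℕ) :
    ∑ n ∈ Ioc 0 N, f n / n ≤ ∏ p ∈ Nat.primesLE N, (1 + f p / p) := by
  have hdiv := hf.pdiv isMultiplicative_id.natCast (R := ℝ)
  have hsupp : ∀ n ∈ Ioc 0 N, f n / n ≠ 0 → n ∣ primorial N := fun n hn hfn ↦ by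
    have hsq : Squarefree n := by
      by_contra h
      exact hfn (by rw [hf.eq_zero_of_not_squarefree hf_sq h, zero_div])
    rw [← Nat.prod_primeFactors_of_squarefree hsq, Nat.prod_primeFactors_dvd_iff
      (primorial_pos N).ne', primeFactors_primorial]
    intro p hp
    rw [Nat.mem_primesLE]
    exact ⟨(Nat.le_of_mem_primeFactors hp).trans (mem_Ioc.1 hn).2,
      Nat.prime_of_mem_primeFactors hp⟩
  calc ∑ n ∈ Ioc 0 N, f n / n = ∑ n ∈ Ioc 0 N with n ∣ primorial N, f n / n :=
        (sum_filter_of_ne hsupp).symm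
    _ ≤ ∑ d ∈ (primorial N).divisors, f d / d :=
        sum_le_sum_of_subset_of_nonneg (fun n hn ↦ Nat.mem_divisors.2
          ⟨(mem_filter.1 hn).2, (primorial_pos N).ne'⟩)
          fun n _ _ ↦ div_nonneg (hf_nonneg n) n.cast_nonneg
    _ = ∏ p ∈ Nat.primesLE N, (1 + f p / p) := by
        rw [← primeFactors_primorial]
        simpa using (hdiv.prodPrimeFactors_one_add_of_squarefree (squarefree_primorial N)).symm

end IsMultiplicative

end ArithmeticFunction

theorem exists_sum_le_mul_prod :
    ∃ C > 0, ∀ f : ArithmeticFunction ℝ, f.IsMultiplicative →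
      (∀ p k, p.Prime → 2 ≤ k → f (p ^ k) = 0) → (∀ n, 0 ≤ f n) → (∀ p, p.Prime → f p ≤ 1) →
      ∀ N : ℕ, ∑ n ∈ Ioc 0 N, f n
        ≤ C * N * ∏ p ∈ Nat.primesLE N, ((1 - (p : ℝ)⁻¹) * (1 + f p / p)) := by
  obtain ⟨c, hc, hmertens⟩ := exists_pos_le_one_add_log_mul_prod_one_sub_inv_prime
  refine ⟨(log 4 + 5) / c, by positivity, fun f hf hf_sq hf_nonneg hf_le N ↦ ?_⟩
  set S := ∑ n ∈ Ioc 0 N, f n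
  set D := ∏ p ∈ Nat.primesLE N, (1 - (p : ℝ)⁻¹)
  set P := ∏ p ∈ Nat.primesLE N, (1 + f p / p)
  have hS : 0 ≤ S := sum_nonneg fun n _ ↦ hf_nonneg n
  have hD : 0 ≤ D := prod_nonneg fun p _ ↦ sub_nonneg.2 (Nat.cast_inv_le_one p)
  have hSP : S * (1 + log N) ≤ (log 4 + 5) * N * P :=
    (hf.sum_mul_one_add_log_le hf_sq hf_nonneg hf_le N).trans <| by
      gcongr
      exact hf.sum_div_le_prod_one_add hf_sq hf_nonneg N
  rw [prod_mul_distrib, div_mul_eq_mul_div, div_mul_eq_mul_div, le_div_iff₀ hc]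
  calc S * c ≤ S * ((1 + log N) * D) := mul_le_mul_of_nonneg_left (hmertens N) hS
    _ = S * (1 + log N) * D := by ring
    _ ≤ (log 4 + 5) * N * P * D := mul_le_mul_of_nonneg_right hSP hD
    _ = (log 4 + 5) * N * (D * P) := by ring

theorem squarefree_and_forall_prime_dvd_mul_iff {P : ℕ → Prop} {m n : ℕ} (hmn : m.Coprime n) :
    (Squarefree (m * n) ∧ ∀ p, p.Prime → p ∣ m * n → P p) ↔
      (Squarefree m ∧ ∀ p, p.Prime → p ∣ m → P p) ∧
        (Squarefree n ∧ ∀ p, p.Prime → p ∣ n → P p) := by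
  simp only [Nat.squarefree_mul hmn]
  constructor
  · rintro ⟨⟨hm, hn⟩, h⟩
    exact ⟨⟨hm, fun p hp hpm ↦ h p hp (dvd_mul_of_dvd_left hpm n)⟩,
      hn, fun p hp hpn ↦ h p hp (dvd_mul_of_dvd_right hpn m)⟩
  · rintro ⟨⟨hm, hPm⟩, hn, hPn⟩
    exact ⟨⟨hm, hn⟩, fun p hp hpmn ↦ (hp.dvd_mul.1 hpmn).elim (hPm p hp) (hPn p hp)⟩

theorem prod_one_sub_inv_mul_one_add_le {s : Finset ℕ} {a : ℕ → ℝ} {P : ℕ → Prop}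
    [DecidablePred P] (ha0 : ∀ p ∈ s, 0 ≤ a p) (ha1 : ∀ p ∈ s, a p ≤ 1)
    (hP : ∀ p ∈ s, P p → a p = 0) :
    ∏ p ∈ s, ((1 - (p : ℝ)⁻¹) * (1 + a p / p)) ≤ ∏ p ∈ s with P p, (1 - (p : ℝ)⁻¹) := by
  have hfactor : ∀ p ∈ s, 0 ≤ (1 - (p : ℝ)⁻¹) * (1 + a p / p) := fun p hp ↦
    mul_nonneg (sub_nonneg.2 (Nat.cast_inv_le_one p)) (by have := ha0 p hp; positivity)
  rw [← prod_filter_mul_prod_filter_not s P]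
  calc (∏ p ∈ s with P p, ((1 - (p : ℝ)⁻¹) * (1 + a p / p)))
        * ∏ p ∈ s with ¬P p, ((1 - (p : ℝ)⁻¹) * (1 + a p / p))
      ≤ (∏ p ∈ s with P p, ((1 - (p : ℝ)⁻¹) * (1 + a p / p))) * 1 := by
        refine mul_le_mul_of_nonneg_left (prod_le_one (fun p hp ↦ hfactor p (mem_filter.1 hp).1)
          fun p hp ↦ ?_) (prod_nonneg fun p hp ↦ hfactor p (mem_filter.1 hp).1)
        have hp := (mem_filter.1 hp).1
        have hu : 0 ≤ (p : ℝ)⁻¹ := by positivity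
        have := Nat.cast_inv_le_one (α := ℝ) p
        rw [div_eq_mul_inv]
        nlinarith [ha0 p hp, ha1 p hp, mul_nonneg (ha0 p hp) (mul_nonneg hu hu)]
    _ = ∏ p ∈ s with P p, (1 - (p : ℝ)⁻¹) := by
        rw [mul_one]
        refine prod_congr rfl fun p hp ↦ ?_
        rw [hP p (mem_filter.1 hp).1 (mem_filter.1 hp).2, zero_div, add_zero, mul_one]

theorem exists_sum_Icc_le_mul_prod :
    ∃ C > (0:ℝ), ∀ g : ℕ → ℝ, g 1 = 1 →
      (∀ m n, Nat.Coprime m n → g (m*n) = g m * g n) →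
      (∀ n, 0 ≤ g n) →
      (∀ p : ℕ, p.Prime → g p ≤ 1) →
      (∀ p ν : ℕ, p.Prime → 2 ≤ ν → g (p^ν) = 0) →
      ∀ x : ℕ, ∑ n ∈ Icc 1 x, g n
        ≤ C * x * ∏ p ∈ (Icc 1 x).filter Nat.Prime, ((1 - 1/(p:ℝ)) * (1 + g p / p)) := by
  obtain ⟨C, hC, hbound⟩ := exists_sum_le_mul_prod
  refine ⟨C, hC, fun g h1 hmul hnn hle hsq x ↦ ?_⟩
  have key := hbound (ofFun g) (isMultiplicative_ofFun h1 hmul)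
    (fun p k hp hk ↦ by rw [ofFun_apply (pow_ne_zero k hp.ne_zero), hsq p k hp hk])
    (fun n ↦ by simp only [ofFun, coe_mk]; split_ifs <;> simp [hnn])
    (fun p hp ↦ by rw [ofFun_apply hp.ne_zero]; exact hle p hp) x
  have hprimes : (Icc 1 x).filter Nat.Prime = Nat.primesLE x := by
    ext p
    simp only [mem_filter, mem_Icc, Nat.mem_primesLE]
    exact ⟨fun ⟨⟨_, h⟩, hp⟩ ↦ ⟨h, hp⟩, fun ⟨h, hp⟩ ↦ ⟨⟨hp.one_le, h⟩, hp⟩⟩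
  rw [← Icc_add_one_left_eq_Ioc, zero_add] at key
  rw [hprimes]
  calc ∑ n ∈ Icc 1 x, g n = ∑ n ∈ Icc 1 x, ofFun g n :=
        sum_congr rfl fun n hn ↦ (ofFun_apply (Nat.one_le_iff_ne_zero.1 (mem_Icc.1 hn).1)).symm
    _ ≤ _ := key
    _ = _ := by
        simp only [one_div]
        exact congrArg _ (prod_congr rfl fun p hp ↦
          by rw [ofFun_apply (Nat.mem_primesLE.1 hp).2.ne_zero])

theorem exists_card_squarefree_le_mul_prod :
    ∃ C > (0:ℝ), ∀ lam : ℕ → ℝ, ∀ x : ℕ,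
      (((Icc 1 x).filter
          (fun n => Squarefree n ∧ ∀ p : ℕ, p.Prime → p ∣ n → lam p ≠ 0)).card : ℝ)
        ≤ C * x * ∏ p ∈ (Icc 1 x).filter (fun p => p.Prime ∧ lam p = 0), (1 - 1/(p:ℝ)) := by
  obtain ⟨C, hC, hbound⟩ := exists_sum_Icc_le_mul_prod
  refine ⟨C, hC, fun lam x ↦ ?_⟩
  set P : ℕ → Prop := fun n ↦ Squarefree n ∧ ∀ p : ℕ, p.Prime → p ∣ n → lam p ≠ 0
  have hP1 : P 1 := ⟨squarefree_one, fun p hp hp1 ↦ (hp.ne_one (Nat.dvd_one.1 hp1)).elim⟩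
  have key := hbound (fun n ↦ if P n then 1 else 0) (if_pos hP1)
    (fun m n hmn ↦ by
      rw [ite_zero_mul_ite_zero, mul_one]
      exact if_congr (squarefree_and_forall_prime_dvd_mul_iff hmn) rfl rfl)
    (fun n ↦ by positivity) (fun p _ ↦ by split_ifs <;> norm_num)
    (fun p ν hp hν ↦ if_neg fun h ↦ by
      have := ((Nat.squarefree_pow_iff hp.ne_one (by omega)).1 h.1).2
      omega) x
  rw [← sum_boole]
  refine key.trans (mul_le_mul_of_nonneg_left ?_ (by positivity))
  rw [← filter_filter]
  simp only [one_div]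
  refine prod_one_sub_inv_mul_one_add_le (fun p _ ↦ by positivity)
    (fun p _ ↦ by split_ifs <;> norm_num) fun p hp hlam ↦ if_neg fun h ↦ ?_
  exact h.2 p (mem_filter.1 hp).2 dvd_rfl hlam

theorem mean_value_upper_bound :
    (∃ C > (0:ℝ), ∀ g : ℕ → ℝ, g 1 = 1 →
      (∀ m n, Nat.Coprime m n → g (m*n) = g m * g n) →
      (∀ n, 0 ≤ g n) →
      (∀ p : ℕ, p.Prime → g p ≤ 1) →
      (∀ p ν : ℕ, p.Prime → 2 ≤ ν → g (p^ν) = 0) →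
      ∀ x : ℕ, 1 ≤ x →
        ∑ n ∈ Finset.Icc 1 x, g n
          ≤ C * x * ∏ p ∈ (Finset.Icc 1 x).filter Nat.Prime,
              ((1 - 1/(p:ℝ)) * (1 + g p / p))) ∧
    (∃ C > (0:ℝ), ∀ lam : ℕ → ℝ, ∀ x : ℕ, 1 ≤ x →
      (((Finset.Icc 1 x).filter
          (fun n => Squarefree n ∧ ∀ p : ℕ, p.Prime → p ∣ n → lam p ≠ 0)).card : ℝ)
        ≤ C * x * ∏ p ∈ (Finset.Icc 1 x).filter (fun p => p.Prime ∧ lam p = 0),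
            (1 - 1/(p:ℝ))) := by
  obtain ⟨C, hC, hsum⟩ := exists_sum_Icc_le_mul_prod
  obtain ⟨C', hC', hcard⟩ := exists_card_squarefree_le_mul_prod
  exact ⟨⟨C, hC, fun g h1 hmul hnn hle hsq x _ ↦ hsum g h1 hmul hnn hle hsq x⟩,
    ⟨C', hC', fun lam x _ ↦ hcard lam x⟩⟩
end
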